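/- arXiv:2212.11723 — 6 statements merged into one kernel-verified Lean document; each statement's English description precedes it below -/
import Mathlib

section
/- Let K be a field, n = r + s - 2 with r, s ≥ 3, and let f : {(i,j) : 1 ≤ i < j ≤ n} → K be a symmetric assignment of values to the diagonals of an n-gon with vertices 1,…,n, where the vertices 1,…,r lie in a subpolygon P and the vertices r-1, r, r+1, …, r+s-2 (with r+s-2 adjacent to r-1) lie in a subpolygon Q glued to P along the diagonal {r-1, r}. Set c = f(r-1,r) and assume c ≠ 0. Assume the Ptolemy relations hold for every diagonal crossing {r-1,r}: for all 1 ≤ i ≤ r-2 and r+1 ≤ j ≤ r+s-2, c·f(i,j) = f(i,r-1)·f(r,j) + f(i,r)·f(r-1,j). Let M_f be the n×n symmetric matrix with zero diagonal and (i,j)-entry f(i,j), let M_P be the r×r matrix built the same way from the values f(i,j) for 1 ≤ i < j ≤ r, and let M_Q be the s×s matrix built from the values f(i,j) for i,j ∈ {r-1, r, r+1, …, r+s-2}. Then det(M_f) = -c^{-2} · det(M_P) · det(M_Q). -/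
/-!
Order the vertices of the glued polygon as those of `P` followed by the new vertices
`r+1, …, r+s-2` of `Q`. The Ptolemy relations say that, in `M_f`, each column of a new vertex
restricted to the rows of `P` is a linear combination of the columns of `r-1` and `r`; the same
holds inside `M_Q`, with the same coefficients. Clearing these columns by column operations
turns both `M_f` and `M_Q` into block lower triangular matrices with the same Schur complement
`S`, so `det M_f = det M_P ⬝ det S` and `det M_Q = det [[0, c], [c, 0]] ⬝ det S = -c² ⬝ det S`.
-/

open Matrix

namespace Matrix

variable {R : Type*} [CommRing R] {m n p : Type*} [Fintype m] [DecidableEq m] [Fintype n]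
  [DecidableEq n] [Fintype p] [DecidableEq p]

theorem det_fromBlocks_of_mul_add_eq_zero (A : Matrix m m R) (B : Matrix m n R)
    (C : Matrix n m R) (D : Matrix n n R) (X : Matrix m n R) (h : A * X + B = 0) :
    (fromBlocks A B C D).det = A.det * (C * X + D).det := by
  have hmul : fromBlocks A B C D * fromBlocks 1 X 0 1 = fromBlocks A 0 C (C * X + D) := by
    simp [fromBlocks_multiply, h]
  simpa [det_fromBlocks_zero₂₁, det_fromBlocks_zero₁₂] using congrArg det hmul

/-- If the upper right block factors as `B = A_{·ι} Y` through some columns `ι` of `A`, then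
`fromBlocks A B C D` and its restriction to the rows and columns `ι ⊕ n` have the same Schur
complement `D - C_{·ι} Y`. -/
theorem det_fromBlocks_mul_det_submatrix_of_mul_eq (A : Matrix m m R) (B : Matrix m n R)
    (C : Matrix n m R) (D : Matrix n n R) (ι : p → m) (Y : Matrix p n R)
    (hB : A.submatrix id ι * Y = B) :
    (fromBlocks A B C D).det * (A.submatrix ι ι).det =
      A.det * (fromBlocks (A.submatrix ι ι) (B.submatrix ι id) (C.submatrix id ι) D).det := by
  have hA : A * (1 : Matrix m m R).submatrix (Equiv.refl m) ι = A.submatrix id ι := by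
    rw [mul_submatrix_one]; rfl
  have hC : C * (1 : Matrix m m R).submatrix (Equiv.refl m) ι = C.submatrix id ι := by
    rw [mul_submatrix_one]; rfl
  have hBι : B.submatrix ι id = A.submatrix ι ι * Y := by
    rw [← hB]; rfl
  have hM := det_fromBlocks_of_mul_add_eq_zero A B C D
    (-((1 : Matrix m m R).submatrix (Equiv.refl m) ι * Y)) (by
      rw [Matrix.mul_neg, ← Matrix.mul_assoc, hA, hB, neg_add_cancel])
  have hQ := det_fromBlocks_of_mul_add_eq_zero (A.submatrix ι ι) (B.submatrix ι id)
    (C.submatrix id ι) D (-Y) (by rw [hBι, Matrix.mul_neg, neg_add_cancel])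
  rw [hM, hQ, Matrix.mul_neg, ← Matrix.mul_assoc, hC, Matrix.mul_neg]
  ring

end Matrix

open Function

section FriezeMatrix

variable {α R : Type*} {m n : Type*} [DecidableEq m] [DecidableEq n]

def friezeMatrix [Zero R] (f : α → α → R) (v : m → α) : Matrix m m R :=
  of fun i j => if i = j then 0 else f (v i) (v j)

theorem friezeMatrix_submatrix [Zero R] {p : Type*} [DecidableEq p] (f : α → α → R) (v : m → α)
    {ι : p → m} (hι : Injective ι) :
    (friezeMatrix f v).submatrix ι ι = friezeMatrix f (v ∘ ι) := by
  ext i j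
  simp [friezeMatrix, hι.eq_iff]

theorem friezeMatrix_sumElim [Zero R] (f : α → α → R) (u : m → α) (w : n → α) :
    friezeMatrix f (Sum.elim u w) =
      fromBlocks (friezeMatrix f u) (of fun i k => f (u i) (w k)) (of fun k i => f (w k) (u i))
        (friezeMatrix f w) := by
  ext (i | i) (j | j) <;> simp [friezeMatrix]

theorem det_friezeMatrix_fin_two [CommRing R] (f : α → α → R) (v : Fin 2 → α) :
    (friezeMatrix f v).det = -(f (v 0) (v 1) * f (v 1) (v 0)) := by
  simp [det_fin_two, friezeMatrix]

theorem det_friezeMatrix_comp_equiv [CommRing R] [Fintype m] [Fintype n] (f : α → α → R)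
    (v : m → α) (e : n ≃ m) :
    (friezeMatrix f (v ∘ e)).det = (friezeMatrix f v).det := by
  rw [← friezeMatrix_submatrix f v e.injective, det_submatrix_equiv_self]

theorem det_friezeMatrix_sumElim_of_ptolemy {K : Type*} [Field K] [Fintype m] [Fintype n] (f : α → α → K) (u : m → α) (w : n → α)
    {a b : m} (hab : a ≠ b) (hc : f (u a) (u b) ≠ 0) (hsym : f (u b) (u a) = f (u a) (u b))
    (hPtolemy : ∀ i, i ≠ a → i ≠ b → ∀ k,
      f (u a) (u b) * f (u i) (w k) = f (u i) (u a) * f (u b) (w k) + f (u i) (u b) * f (u a) (w k)) :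
    (friezeMatrix f (Sum.elim u w)).det =
      -(f (u a) (u b))⁻¹ ^ 2 * (friezeMatrix f u).det *
        (friezeMatrix f (Sum.elim ![u a, u b] w)).det := by
  let ι : Fin 2 → m := ![a, b]
  have hι : Injective ι := by
    intro x y
    fin_cases x <;> fin_cases y <;> simp [ι, hab, hab.symm]
  have hu : u ∘ ι = ![u a, u b] := by
    ext q
    fin_cases q <;> rfl
  -- the Ptolemy relations say that column `w k` is a combination of the columns `u a`, `u b`
  let Y : Matrix (Fin 2) n K :=
    of ![fun k => (f (u a) (u b))⁻¹ * f (u b) (w k), fun k => (f (u a) (u b))⁻¹ * f (u a) (w k)]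
  have hY : (friezeMatrix f u).submatrix id ι * Y = of fun i k => f (u i) (w k) := by
    ext i k
    simp only [mul_apply, Fin.sum_univ_two]
    dsimp only [friezeMatrix, submatrix_apply, of_apply, id, ι, Y, cons_val_zero, cons_val_one]
    rcases eq_or_ne i a with rfl | hia
    · simp only [↓reduceIte, if_neg hab, zero_mul, zero_add]
      field_simp
    rcases eq_or_ne i b with rfl | hib
    · simp only [if_neg hia, ↓reduceIte, hsym, zero_mul, add_zero]
      field_simp
    simp only [if_neg hia, if_neg hib]
    field_simp
    linear_combination (hPtolemy i hia hib k).symm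
  have hglue := det_fromBlocks_mul_det_submatrix_of_mul_eq _ _
    (of fun k i => f (w k) (u i)) (friezeMatrix f w) ι Y hY
  have hQ : fromBlocks ((friezeMatrix f u).submatrix ι ι)
      ((of fun i k => f (u i) (w k)).submatrix ι id) ((of fun k i => f (w k) (u i)).submatrix id ι)
      (friezeMatrix f w) = friezeMatrix f (Sum.elim ![u a, u b] w) := by
    rw [← hu, friezeMatrix_sumElim, friezeMatrix_submatrix f u hι]
    rfl
  rw [← friezeMatrix_sumElim, hQ, friezeMatrix_submatrix f u hι, hu, det_friezeMatrix_fin_two]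
    at hglue
  simp only [Matrix.cons_val_zero, Matrix.cons_val_one, hsym] at hglue
  rw [mul_assoc, ← hglue]
  field_simp

end FriezeMatrix

/-- Theorem 3.3 (main gluing theorem): let an `(r+s-2)`-gon `R` be glued from an
`r`-gon `P` (vertices `1,…,r`) and an `s`-gon `Q` (vertices `r-1,r,r+1,…,r+s-2`)
along the diagonal `{r-1,r}`, and let `f` be a weak frieze with respect to this
one-diagonal dissection with `f(r-1,r) ≠ 0`.  Then
`det M_f = - f(r-1,r)⁻² ⬝ det M_P ⬝ det M_Q`. -/
theorem det_glued_weak_frieze {K : Type*} [Field K] (r s : ℕ) (hr : 3 ≤ r) (hs : 3 ≤ s)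
    (f : ℕ → ℕ → K)
    (hsym : ∀ i j, f i j = f j i)
    (hc : f (r - 1) r ≠ 0)
    (hPtolemy : ∀ i j, 1 ≤ i → i ≤ r - 2 → r + 1 ≤ j → j ≤ r + s - 2 →
      f (r - 1) r * f i j = f i (r - 1) * f r j + f i r * f (r - 1) j) :
    (Matrix.of fun i j : Fin (r + s - 2) =>
        if i = j then (0 : K) else f (i.val + 1) (j.val + 1)).det
      = - (f (r - 1) r)⁻¹ ^ 2 *
        (Matrix.of fun i j : Fin r =>
            if i = j then (0 : K) else f (i.val + 1) (j.val + 1)).det *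
        (Matrix.of fun i j : Fin s =>
            if i = j then (0 : K) else f (i.val + r - 1) (j.val + r - 1)).det := by
  show (friezeMatrix f fun i : Fin (r + s - 2) => i.val + 1).det =
    -(f (r - 1) r)⁻¹ ^ 2 * (friezeMatrix f fun i : Fin r => i.val + 1).det *
      (friezeMatrix f fun i : Fin s => i.val + r - 1).det
  let u : Fin r → ℕ := fun i => i.val + 1
  let w : Fin (s - 2) → ℕ := fun k => r + k.val + 1
  let a : Fin r := ⟨r - 2, by omega⟩
  let b : Fin r := ⟨r - 1, by omega⟩
  have hua : u a = r - 1 := by simp only [u, a]; omega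
  have hub : u b = r := by simp only [u, b]; omega
  have hM : (friezeMatrix f fun i : Fin (r + s - 2) => i.val + 1).det =
      (friezeMatrix f (Sum.elim u w)).det := by
    rw [← det_friezeMatrix_comp_equiv f _
      (finSumFinEquiv.trans (finCongr (show r + (s - 2) = r + s - 2 by omega)))]
    refine congrArg (fun v => (friezeMatrix f v).det) ?_
    ext (i | k) <;> simp [u, w]
  have hQ : (friezeMatrix f fun i : Fin s => i.val + r - 1).det =
      (friezeMatrix f (Sum.elim ![r - 1, r] w)).det := by
    rw [← det_friezeMatrix_comp_equiv f _
      (finSumFinEquiv.trans (finCongr (show 2 + (s - 2) = s by omega)))]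
    refine congrArg (fun v => (friezeMatrix f v).det) ?_
    ext (q | k)
    · fin_cases q <;> simp
    · exact (show 2 + k.val + r - 1 = r + k.val + 1 by omega)
  have hglue := det_friezeMatrix_sumElim_of_ptolemy f u w (a := a) (b := b)
    (Fin.ne_of_val_ne (show r - 2 ≠ r - 1 by omega)) (by rwa [hua, hub]) (by rw [hua, hub, hsym])
    (fun i hia hib k => by
      rw [hua, hub]
      have hia' : i.val ≠ r - 2 := fun h => hia (Fin.ext h)
      have hib' : i.val ≠ r - 1 := fun h => hib (Fin.ext h)
      exact hPtolemy (i.val + 1) (r + k.val + 1) (by omega) (by omega) (by omega) (by omega))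
  rw [hM, hQ, hglue, hua, hub]
end

section
/- Let K be a field and f : diag(P_n) → K a frieze on the n-gon (n ≥ 3), i.e., a symmetric map on pairs of distinct vertices satisfying the Ptolemy relation f(i,k)f(j,ℓ) = f(i,j)f(k,ℓ) + f(i,ℓ)f(j,k) for all 1 ≤ i < j < k < ℓ ≤ n. Let M_f be the n×n symmetric matrix with zero diagonal and entries f(i,j). Then det(M_f) = -(-2)^{n-2} · f(1,2)·f(2,3)·…·f(n-1,n)·f(n,1). -/
/-!
The Ptolemy relations force a frieze to be the matrix of `2 × 2` minors of `n` points
`p_i = (u_i, v_i)` in the plane: if `f(a, b) ≠ 0` one may take `u_i = ±f(a, i)` and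
`v_i = ±f(b, i) / f(a, b)`, the Ptolemy relation being the Plücker relation among these minors.
When every `u_i` is nonzero, scaling row and column `i` by `u_i⁻¹` turns `M_f` into the distance
matrix `(|w_i - w_j|)` of the points `w_i = v_i / u_i` on a line, and differencing consecutive rows
and columns of that matrix leaves an arrowhead matrix whose determinant is read off directly.
The case of arbitrary points follows by specialising the identity for generic points.
-/

open Matrix Finset

section

variable {R : Type*} [CommRing R]

def pathDistMatrix (n : ℕ) (w : ℕ → R) : Matrix (Fin n) (Fin n) R :=
  of fun i j => if (i : ℕ) ≤ j then w j - w i else w i - w j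

/-- `[[0, dᵀ], [d, -2 • diagonal d]]`: what `pathDistMatrix` becomes after differencing consecutive
rows and columns, `d` being the gaps between consecutive points. -/
def pathArrowhead {m : ℕ} (d : Fin m → R) : Matrix (Fin (m + 1)) (Fin (m + 1)) R :=
  of (vecCons (vecCons 0 d) fun i => vecCons (d i) (diagonal (-2 • d) i))

theorem det_pathDistMatrix_eq_det_pathArrowhead (m : ℕ) (w : ℕ → R) :
    (pathDistMatrix (m + 1) w).det = (pathArrowhead fun i : Fin m => w (i + 1) - w i).det := by
  let Y : Matrix (Fin (m + 1)) (Fin (m + 1)) R := of fun i =>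
    vecCons (w i - w 0) fun j => if (i : ℕ) ≤ j then w (j + 1) - w j else w j - w (j + 1)
  calc (pathDistMatrix (m + 1) w).det = Y.det := by
        refine det_eq_of_forall_col_eq_smul_add_pred (fun _ => 1) (fun i => ?_) fun i j => ?_
        · simp only [Y, pathDistMatrix, of_apply, cons_val_zero, Fin.val_zero]
          split_ifs <;> grind
        · simp only [Y, pathDistMatrix, of_apply, cons_val_succ, Fin.val_succ, Fin.val_castSucc]
          split_ifs <;> grind
    _ = _ := by
        refine det_eq_of_forall_row_eq_smul_add_pred (fun _ => 1) (fun j => ?_) fun i j => ?_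
        · refine Fin.cases ?_ (fun j => ?_) j <;> simp [Y, pathArrowhead]
        · refine Fin.cases ?_ (fun j => ?_) j
          · simp [Y, pathArrowhead]
          · simp only [Y, pathArrowhead, of_apply, cons_val_succ, Fin.val_succ,
              Fin.val_castSucc, diagonal_apply, Pi.smul_apply, Fin.ext_iff]
            split_ifs <;> grind

theorem det_pathArrowhead [IsDomain R] [NeZero (2 : R)] {m : ℕ} (d : Fin m → R) :
    (pathArrowhead d).det = -(-2) ^ (m - 1) * (∏ i, d i) * ∑ i, d i := by
  -- twice row `0` plus all the other rows is `(∑ i, d i, 0, …, 0)`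
  set L := (pathArrowhead d).updateRow 0 (∑ k, vecCons (2 : R) 1 k • pathArrowhead d k)
  have hL : L.det = 2 * (pathArrowhead d).det := by
    simpa using det_updateRow_sum (pathArrowhead d) 0 (vecCons 2 1)
  have hlower : L.IsLowerTriangular := by
    intro i j (hij : i < j)
    revert hij
    refine Fin.cases ?_ (fun i => ?_) i <;> refine Fin.cases ?_ (fun j => ?_) j <;> intro hij <;>
      simp_all [L, pathArrowhead, Fin.sum_univ_succ, diagonal_apply, ne_of_lt]
  have h2det : 2 * (pathArrowhead d).det = (-2) ^ m * (∏ i, d i) * ∑ i, d i := by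
    rw [← hL, det_of_isLowerTriangular _ hlower, Fin.prod_univ_succ]
    simp [L, pathArrowhead, Fin.sum_univ_succ, ← neg_mul, Finset.prod_mul_distrib]
    ring
  rcases m with _ | m
  · simp [pathArrowhead]
  · apply mul_left_cancel₀ (two_ne_zero (α := R))
    rw [h2det, Nat.add_sub_cancel, pow_succ]
    ring

theorem det_pathDistMatrix [IsDomain R] [NeZero (2 : R)] (m : ℕ) (w : ℕ → R) :
    (pathDistMatrix (m + 1) w).det
      = -(-2) ^ (m - 1) * (∏ i ∈ range m, (w (i + 1) - w i)) * (w m - w 0) := by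
  rw [det_pathDistMatrix_eq_det_pathArrowhead, det_pathArrowhead,
    Fin.prod_univ_eq_prod_range (fun i => w (i + 1) - w i),
    Fin.sum_univ_eq_sum_range (fun i => w (i + 1) - w i), sum_range_sub]

def pluckerMatrix (n : ℕ) (u v : ℕ → R) : Matrix (Fin n) (Fin n) R :=
  of fun i j => if (i : ℕ) ≤ j then u i * v j - u j * v i else u j * v i - u i * v j

theorem mapMatrix_pluckerMatrix {S : Type*} [CommRing S] (φ : R →+* S) (n : ℕ) (u v : ℕ → R) :
    φ.mapMatrix (pluckerMatrix n u v) = pluckerMatrix n (φ ∘ u) (φ ∘ v) := by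
  ext i j
  simp only [RingHom.mapMatrix_apply, map_apply, pluckerMatrix, of_apply, Function.comp_apply]
  split_ifs <;> simp

theorem pluckerMatrix_eq_diagonal_mul_pathDistMatrix_mul_diagonal {K : Type*} [Field K] {n : ℕ}
    {u : ℕ → K} (hu : ∀ i, u i ≠ 0) (v : ℕ → K) :
    pluckerMatrix n u v
      = diagonal (fun i : Fin n => u i) * pathDistMatrix n (v / u)
        * diagonal (fun i : Fin n => u i) := by
  ext i j
  simp only [pluckerMatrix, pathDistMatrix, mul_diagonal, diagonal_mul, of_apply, Pi.div_apply]
  have := hu i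
  have := hu j
  split_ifs <;> field_simp

theorem det_pluckerMatrix_of_ne_zero {K : Type*} [Field K] [NeZero (2 : K)] (m : ℕ)
    {u : ℕ → K} (hu : ∀ i, u i ≠ 0) (v : ℕ → K) :
    (pluckerMatrix (m + 1) u v).det = -(-2) ^ (m - 1)
      * (∏ i ∈ range m, (u i * v (i + 1) - u (i + 1) * v i)) * (u 0 * v m - u m * v 0) := by
  have hminor : ∀ i j, u i * v j - u j * v i = u i * u j * ((v / u) j - (v / u) i) := by
    intro i j
    have := hu i
    have := hu j
    simp only [Pi.div_apply]
    field_simp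
  rw [pluckerMatrix_eq_diagonal_mul_pathDistMatrix_mul_diagonal hu, det_mul, det_mul,
    det_diagonal, det_pathDistMatrix, hminor 0 m, prod_congr rfl fun i _ => hminor i (i + 1),
    prod_mul_distrib, prod_mul_distrib]
  have hfirst : ∏ i : Fin (m + 1), u i = u 0 * ∏ i ∈ range m, u (i + 1) := by
    rw [Fin.prod_univ_eq_prod_range (fun i => u i), prod_range_succ', mul_comm]
  have hlast : ∏ i : Fin (m + 1), u i = (∏ i ∈ range m, u i) * u m := by
    rw [Fin.prod_univ_eq_prod_range (fun i => u i), prod_range_succ]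
  nth_rewrite 1 [hfirst]
  rw [hlast]
  ring

theorem det_pluckerMatrix (m : ℕ) (u v : ℕ → R) :
    (pluckerMatrix (m + 1) u v).det = -(-2) ^ (m - 1)
      * (∏ i ∈ range m, (u i * v (i + 1) - u (i + 1) * v i)) * (u 0 * v m - u m * v 0) := by
  let A := MvPolynomial (ℕ ⊕ ℕ) ℤ
  let K := FractionRing A
  have hinj := IsFractionRing.injective A K
  let x : ℕ → A := fun i => MvPolynomial.X (Sum.inl i)
  let y : ℕ → A := fun i => MvPolynomial.X (Sum.inr i)
  have hgeneric : (pluckerMatrix (m + 1) x y).det = -(-2) ^ (m - 1)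
      * (∏ i ∈ range m, (x i * y (i + 1) - x (i + 1) * y i)) * (x 0 * y m - x m * y 0) := by
    apply hinj
    rw [RingHom.map_det, mapMatrix_pluckerMatrix, det_pluckerMatrix_of_ne_zero]
    · simp [map_ofNat]
    · intro i
      simpa using (map_ne_zero_iff _ hinj).mpr (MvPolynomial.X_ne_zero (R := ℤ) (Sum.inl i))
  have := congrArg (MvPolynomial.aeval (R := ℤ) (Sum.elim u v)).toRingHom hgeneric
  rw [RingHom.map_det, mapMatrix_pluckerMatrix] at this
  simpa [x, y, Function.comp_def] using this

section Frieze

variable {n : ℕ} {f : ℕ → ℕ → R}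

def skewExtension (f : ℕ → ℕ → R) (i j : ℕ) : R :=
  if i < j then f i j else if j < i then -f j i else 0

theorem skewExtension_of_lt {i j : ℕ} (h : i < j) : skewExtension f i j = f i j := if_pos h

theorem skewExtension_self (i : ℕ) : skewExtension f i i = 0 := by simp [skewExtension]

theorem skewExtension_swap (i j : ℕ) : skewExtension f j i = -skewExtension f i j := by
  unfold skewExtension
  split_ifs <;> first | omega | simp

theorem skewExtension_plucker_relation
    (hP : ∀ i j k l, 1 ≤ i → i < j → j < k → k < l → l ≤ n →
      f i k * f j l = f i j * f k l + f i l * f j k)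
    {a b i j : ℕ} (ha : 1 ≤ a) (hab : a < b) (hb : b ≤ n) (hi : 1 ≤ i) (hij : i < j) (hj : j ≤ n) :
    f a b * f i j = skewExtension f a i * skewExtension f b j
      - skewExtension f a j * skewExtension f b i := by
  wlog hai : a ≤ i generalizing a b i j
  · have := this hi hij hj ha hab hb (by omega)
    rw [skewExtension_swap a i, skewExtension_swap b j, skewExtension_swap b i,
      skewExtension_swap a j] at this
    linear_combination this
  rcases hai.eq_or_lt with rfl | hai
  · rw [skewExtension_self, skewExtension_of_lt hij, skewExtension_swap a b,
      skewExtension_of_lt hab]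
    ring
  rw [skewExtension_of_lt hai, skewExtension_of_lt (hai.trans hij)]
  rcases lt_trichotomy b i with hbi | rfl | hbi
  · rw [skewExtension_of_lt hbi, skewExtension_of_lt (hbi.trans hij)]
    linear_combination -hP a b i j ha hab hbi hij hj
  · rw [skewExtension_self, skewExtension_of_lt hij]
    ring
  rw [skewExtension_swap i b, skewExtension_of_lt hbi]
  rcases lt_trichotomy b j with hbj | rfl | hbj
  · rw [skewExtension_of_lt hbj]
    linear_combination hP a i b j ha hai hbi hbj hj
  · rw [skewExtension_self]
    ring
  · rw [skewExtension_swap j b, skewExtension_of_lt hbj]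
    linear_combination -hP a i j b ha hai hij hbj hb

theorem friezeMatrix_eq_pluckerMatrix (hsym : ∀ i j, f i j = f j i) {u v : ℕ → R}
    (huv : ∀ i j, 1 ≤ i → i < j → j ≤ n → f i j = u i * v j - u j * v i) :
    (of fun i j : Fin n => if i = j then 0 else f (i + 1) (j + 1))
      = pluckerMatrix n (fun i => u (i + 1)) (fun i => v (i + 1)) := by
  ext i j
  simp only [of_apply, pluckerMatrix]
  rcases lt_trichotomy i j with h | rfl | h
  · rw [if_neg h.ne, if_pos (by omega), huv _ _ (by omega) (by omega) (by omega)]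
  · simp
  · rw [if_neg h.ne', if_neg (by omega), hsym, huv _ _ (by omega) (by omega) (by omega)]

end Frieze

end

theorem exists_plucker_coords_of_ptolemy {K : Type*} [Field K] {n : ℕ} {f : ℕ → ℕ → K}
    (hP : ∀ i j k l, 1 ≤ i → i < j → j < k → k < l → l ≤ n →
      f i k * f j l = f i j * f k l + f i l * f j k) :
    ∃ u v : ℕ → K, ∀ i j, 1 ≤ i → i < j → j ≤ n → f i j = u i * v j - u j * v i := by
  by_cases hzero : ∀ a b, 1 ≤ a → a < b → b ≤ n → f a b = 0
  · exact ⟨0, 0, fun i j hi hij hj => by simpa using hzero i j hi hij hj⟩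
  push Not at hzero
  obtain ⟨a, b, ha, hab, hb, hc⟩ := hzero
  refine ⟨skewExtension f a, fun j => skewExtension f b j / f a b, fun i j hi hij hj => ?_⟩
  field_simp
  linear_combination skewExtension_plucker_relation hP ha hab hb hi hij hj

/-- (Baur–Marsh) For a frieze `f` on the `n`-gon (all Ptolemy relations hold),
`det M_f = -(-2)^(n-2) f(1,2) f(2,3) ⋯ f(n-1,n) f(n,1)`. -/
theorem det_frieze_matrix_baur_marsh {K : Type*} [Field K] (n : ℕ) (hn : 3 ≤ n)
    (f : ℕ → ℕ → K)
    (hsym : ∀ i j, f i j = f j i)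
    (hPtolemy : ∀ i j k l, 1 ≤ i → i < j → j < k → k < l → l ≤ n →
      f i k * f j l = f i j * f k l + f i l * f j k) :
    (Matrix.of fun i j : Fin n => if i = j then (0 : K) else f (i.val + 1) (j.val + 1)).det
      = -(-2 : K) ^ (n - 2) * (∏ i ∈ Finset.Icc 1 (n - 1), f i (i + 1)) * f n 1 := by
  obtain ⟨u, v, huv⟩ := exists_plucker_coords_of_ptolemy hPtolemy
  obtain ⟨m, rfl⟩ : ∃ m, n = m + 1 := ⟨n - 1, by omega⟩
  have hprod : ∏ i ∈ Icc 1 m, f i (i + 1) = ∏ i ∈ range m, f (i + 1) (i + 2) := by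
    rw [← Finset.Ico_add_one_right_eq_Icc, prod_Ico_eq_prod_range, Nat.add_sub_cancel]
    exact prod_congr rfl fun i _ => by rw [add_comm 1 i]
  rw [friezeMatrix_eq_pluckerMatrix hsym huv, det_pluckerMatrix, Nat.add_sub_cancel,
    show m + 1 - 2 = m - 1 by omega, hprod, hsym (m + 1), huv 1 (m + 1) le_rfl (by omega) le_rfl,
    prod_congr rfl fun i hi => huv (i + 1) (i + 2) (by omega) (by omega) (by simp at hi; omega)]
end

section
/- Let f : diag(P_n) → ℤ be a frieze on the n-gon with f(i,i+1) = 1 for all consecutive vertices (indices mod n), satisfying all Ptolemy relations. Then for the n×n symmetric matrix M_f with zero diagonal and entries f(i,j), one has det(M_f) = -(-2)^{n-2}. -/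
/-!
Ptolemy's relation for the quadrilateral `j, j+1, j+2, w`, whose two sides `{j, j+1}` and
`{j+1, j+2}` are edges of the polygon, gives the three-term recurrence
`f(j+2, w) + f(j, w) = f(j, j+2) f(j+1, w)` for every other vertex `w`. Hence the unitriangular row
operation "row `j+2` minus `f(j, j+2)` times row `j+1` plus row `j`" turns row `j+2` of `M_f` into
`2 e_{j+1}`, the `2` coming from the two edges at `j+1`. Only the first two rows survive; relabelling
the rows by `i ↦ i + 2` and the columns by `i ↦ i + 1` (mod `n`) makes the matrix lower triangular
with diagonal `(2, …, 2, f(1, n), f(2, 1)) = (2, …, 2, 1, 1)`, and the relabelling has sign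
`(-1)^(n-1)`.
-/

open Matrix

section CyclicRelabelling

variable {R : Type*} [CommRing R] {m : ℕ}

theorem val_finRotate_add_two (i : Fin (m + 2)) :
    (finRotate (m + 2) i).val = if i.val = m + 1 then 0 else i.val + 1 := by
  rw [coe_finRotate (n := m + 1)]
  simp [Fin.ext_iff]

theorem det_submatrix_finRotate (N : Matrix (Fin (m + 2)) (Fin (m + 2)) R) :
    (N.submatrix (finRotate (m + 2) * finRotate (m + 2)) (finRotate (m + 2))).det =
      (-1) ^ (m + 1) * N.det := by
  rw [show N.submatrix (finRotate (m + 2) * finRotate (m + 2)) (finRotate (m + 2)) =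
      (N.submatrix id (finRotate (m + 2))).submatrix (finRotate (m + 2) * finRotate (m + 2)) id
      from rfl, det_permute, det_permute', map_mul, Int.units_mul_self, Units.val_one,
    Int.cast_one, one_mul, sign_finRotate]
  simp

variable (N : Matrix (Fin (m + 2)) (Fin (m + 2)) R) (d : R)

theorem isLowerTriangular_submatrix_finRotate (h00 : N 0 0 = 0)
    (hN : ∀ i j : Fin (m + 2), 2 ≤ i.val → N i j = if j.val + 1 = i.val then d else 0) :
    (N.submatrix (finRotate (m + 2) * finRotate (m + 2)) (finRotate (m + 2))).IsLowerTriangular := by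
  intro i j (hij : i < j)
  have hi := val_finRotate_add_two i
  have hii := val_finRotate_add_two (finRotate (m + 2) i)
  have hj := val_finRotate_add_two j
  have hij' : i.val < j.val := hij
  have := j.isLt
  simp only [submatrix_apply, Equiv.Perm.mul_apply]
  by_cases hm : i.val < m
  · rw [hN _ _ (by rw [hii, hi]; split_ifs <;> omega),
      if_neg (by rw [hii, hi, hj]; split_ifs <;> omega)]
  · rw [show finRotate (m + 2) (finRotate (m + 2) i) = 0 from
        Fin.ext (by rw [hii, hi]; split_ifs <;> simp <;> omega),
      show finRotate (m + 2) j = 0 from Fin.ext (by rw [hj]; split_ifs <;> simp; omega), h00]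

theorem prod_diag_submatrix_finRotate
    (hN : ∀ i j : Fin (m + 2), 2 ≤ i.val → N i j = if j.val + 1 = i.val then d else 0) :
    ∏ i, N.submatrix (finRotate (m + 2) * finRotate (m + 2)) (finRotate (m + 2)) i i =
      d ^ m * N 0 (Fin.last (m + 1)) * N 1 0 := by
  have hsub (k : Fin m) : N (finRotate (m + 2) (finRotate (m + 2) k.castSucc.castSucc))
      (finRotate (m + 2) k.castSucc.castSucc) = d := by
    have hk := val_finRotate_add_two k.castSucc.castSucc
    have hkk := val_finRotate_add_two (finRotate (m + 2) k.castSucc.castSucc)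
    have := k.isLt
    simp only [Fin.val_castSucc] at hk
    rw [hN _ _ (by rw [hkk, hk]; split_ifs <;> omega),
      if_pos (by rw [hkk, hk]; split_ifs <;> omega)]
  have hlast : finRotate (m + 2) (Fin.last (m + 1)) = 0 :=
    Fin.ext (by rw [val_finRotate_add_two]; simp)
  have hpen : finRotate (m + 2) (Fin.last m).castSucc = Fin.last (m + 1) :=
    Fin.ext (by rw [val_finRotate_add_two]; simp)
  have hzero : finRotate (m + 2) 0 = 1 := Fin.ext (by rw [val_finRotate_add_two]; simp)
  simp only [submatrix_apply, Equiv.Perm.mul_apply]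
  rw [Fin.prod_univ_castSucc, Fin.prod_univ_castSucc, Finset.prod_congr rfl fun k _ => hsub k,
    Finset.prod_const, Finset.card_univ, Fintype.card_fin, hpen, hlast, hzero]

theorem det_eq_of_rows_eq_subdiagonal (h00 : N 0 0 = 0)
    (hN : ∀ i j : Fin (m + 2), 2 ≤ i.val → N i j = if j.val + 1 = i.val then d else 0) :
    N.det = (-1) ^ (m + 1) * d ^ m * N 0 (Fin.last (m + 1)) * N 1 0 := by
  calc N.det = (-1) ^ (m + 1) * ((-1) ^ (m + 1) * N.det) := by
        rw [← mul_assoc, ← pow_add, ← two_mul, pow_mul, neg_one_sq, one_pow, one_mul]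
    _ = (-1) ^ (m + 1) * d ^ m * N 0 (Fin.last (m + 1)) * N 1 0 := by
        rw [← det_submatrix_finRotate, det_of_isLowerTriangular _
          (isLowerTriangular_submatrix_finRotate N d h00 hN), prod_diag_submatrix_finRotate N d hN]
        ring

end CyclicRelabelling

section RowReduction

variable {R : Type*} [CommRing R] {n : ℕ}

theorem Matrix.of_mul_of_apply (a b : ℕ → ℕ → R) (i l : Fin n) :
    ((of fun i j : Fin n => a i j) * of fun i j : Fin n => b i j) i l =
      ∑ k ∈ Finset.range n, a i k * b k l := by
  rw [mul_apply]
  exact Fin.sum_univ_eq_sum_range (fun k => a i k * b k l) n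

def rowReduction (c : ℕ → R) (i k : ℕ) : R :=
  (if k = i then 1 else 0) +
    if 2 ≤ i then (if k = i - 1 then -c i else 0) + (if k = i - 2 then 1 else 0) else 0

theorem det_of_rowReduction (c : ℕ → R) : (of fun i k : Fin n => rowReduction c i k).det = 1 := by
  rw [det_of_isLowerTriangular _ fun i k (hik : i < k) => ?_]
  · refine Finset.prod_eq_one fun i _ => ?_
    simp only [rowReduction, of_apply]
    split_ifs <;> first | omega | simp
  · have : i.val < k.val := hik
    simp only [rowReduction, of_apply]
    split_ifs <;> first | omega | simp

theorem of_rowReduction_mul_of_apply (c : ℕ → R) (g : ℕ → ℕ → R) (i l : Fin n) :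
    ((of fun i k : Fin n => rowReduction c i k) * of fun i j : Fin n => g i j) i l =
      g i l + if 2 ≤ i.val then -c i * g (i - 1) l + g (i - 2) l else 0 := by
  rw [of_mul_of_apply]
  by_cases hi : 2 ≤ i.val
  · simp only [rowReduction, hi, if_true, add_mul, ite_mul, one_mul, zero_mul,
      Finset.sum_add_distrib, Finset.sum_ite_eq', Finset.mem_range]
    rw [if_pos i.isLt, if_pos (by omega), if_pos (by omega)]
  · simp [rowReduction, hi]

end RowReduction

section Frieze

variable {R : Type*} [CommRing R] {n : ℕ} {f : ℕ → ℕ → R}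

theorem frieze_three_term_recurrence (hsym : ∀ i j, f i j = f j i)
    (hedge : ∀ i, 1 ≤ i → i ≤ n - 1 → f i (i + 1) = 1)
    (hPtolemy : ∀ i j k l, 1 ≤ i → i < j → j < k → k < l → l ≤ n →
      f i k * f j l = f i j * f k l + f i l * f j k)
    {j w : ℕ} (hj : 1 ≤ j) (hjn : j + 2 ≤ n) (hw : 1 ≤ w) (hwn : w ≤ n)
    (hw₀ : w ≠ j) (hw₁ : w ≠ j + 1) (hw₂ : w ≠ j + 2) :
    f (j + 2) w + f j w = f j (j + 2) * f (j + 1) w := by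
  have e₀ : f j (j + 1) = 1 := hedge j hj (by omega)
  have e₁ : f (j + 1) (j + 2) = 1 := hedge (j + 1) (by omega) (by omega)
  rcases lt_or_gt_of_ne hw₀ with hlt | hgt
  · have := hPtolemy w j (j + 1) (j + 2) hw hlt (by omega) (by omega) hjn
    rw [e₀, e₁, hsym w, hsym w, hsym w] at this
    linear_combination -this
  · have := hPtolemy j (j + 1) (j + 2) w hj (by omega) (by omega) (by omega) hwn
    rw [e₀, e₁] at this
    linear_combination -this

def friezeEntry (f : ℕ → ℕ → R) (i j : ℕ) : R := if i = j then 0 else f (i + 1) (j + 1)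

theorem friezeEntry_row_relation (hsym : ∀ i j, f i j = f j i)
    (hedge : ∀ i, 1 ≤ i → i ≤ n - 1 → f i (i + 1) = 1)
    (hPtolemy : ∀ i j k l, 1 ≤ i → i < j → j < k → k < l → l ≤ n →
      f i k * f j l = f i j * f k l + f i l * f j k)
    {j l : ℕ} (hj : j + 2 < n) (hl : l < n) :
    friezeEntry f (j + 2) l - f (j + 1) (j + 3) * friezeEntry f (j + 1) l + friezeEntry f j l =
      if l + 1 = j + 2 then 2 else 0 := by
  have e₀ : f (j + 1) (j + 2) = 1 := hedge (j + 1) (by omega) (by omega)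
  have e₁ : f (j + 2) (j + 3) = 1 := hedge (j + 2) (by omega) (by omega)
  have e₂ : f (j + 3) (j + 2) = 1 := by rw [hsym, e₁]
  have e₃ : f (j + 2) (j + 1) = 1 := by rw [hsym, e₀]
  obtain rfl | rfl | rfl | ⟨h₀, h₁, h₂⟩ :
      j = l ∨ j + 1 = l ∨ j + 2 = l ∨ (l ≠ j ∧ l ≠ j + 1 ∧ l ≠ j + 2) := by omega
  · simp [friezeEntry, e₃, hsym (j + 3)]
  · simp [friezeEntry, e₂, e₀, one_add_one_eq_two]
  · simp [friezeEntry, e₁]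
  · have := frieze_three_term_recurrence hsym hedge hPtolemy (j := j + 1) (w := l + 1) (by omega) (by omega)
      (by omega) (by omega) (by omega) (by omega) (by omega)
    simp only [friezeEntry]
    rw [if_neg (by omega), if_neg (by omega), if_neg (by omega), if_neg (by omega)]
    linear_combination this

theorem rowReduction_mul_friezeEntry_of_two_le (hsym : ∀ i j, f i j = f j i)
    (hedge : ∀ i, 1 ≤ i → i ≤ n - 1 → f i (i + 1) = 1)
    (hPtolemy : ∀ i j k l, 1 ≤ i → i < j → j < k → k < l → l ≤ n →
      f i k * f j l = f i j * f k l + f i l * f j k)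
    {i : Fin n} (hi : 2 ≤ i.val) (l : Fin n) :
    ((of fun i k : Fin n => rowReduction (fun i => f (i - 1) (i + 1)) i k) *
        of fun i j : Fin n => friezeEntry f i j) i l =
      if l.val + 1 = i.val then 2 else 0 := by
  obtain ⟨j, hj⟩ : ∃ j, i.val = j + 2 := ⟨i.val - 2, by omega⟩
  rw [of_rowReduction_mul_of_apply, if_pos hi, hj, show j + 2 - 1 = j + 1 by omega,
    Nat.add_sub_cancel, ← friezeEntry_row_relation hsym hedge hPtolemy (by omega) l.isLt]
  ring

end Frieze

/-- (Broline–Crowe–Isaacs) For a classic frieze `f` on the `n`-gon, i.e. one with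
`f(i,i+1) = 1` on all edges (including `f(n,1) = 1`) and satisfying all Ptolemy
relations, `det M_f = -(-2)^(n-2)`. -/
theorem det_frieze_matrix_BCI (n : ℕ) (hn : 3 ≤ n)
    (f : ℕ → ℕ → ℤ)
    (hsym : ∀ i j, f i j = f j i)
    (hedge : ∀ i, 1 ≤ i → i ≤ n - 1 → f i (i + 1) = 1)
    (hedge' : f n 1 = 1)
    (hPtolemy : ∀ i j k l, 1 ≤ i → i < j → j < k → k < l → l ≤ n →
      f i k * f j l = f i j * f k l + f i l * f j k) :
    (Matrix.of fun i j : Fin n => if i = j then (0 : ℤ) else f (i.val + 1) (j.val + 1)).det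
      = -(-2 : ℤ) ^ (n - 2) := by
  obtain ⟨m, rfl⟩ : ∃ m, n = m + 2 := ⟨n - 2, by omega⟩
  set L := of fun i k : Fin (m + 2) => rowReduction (fun i => f (i - 1) (i + 1)) i k
  set M := of fun i j : Fin (m + 2) => friezeEntry f i j
  have hM : (of fun i j : Fin (m + 2) => if i = j then 0 else f (i.val + 1) (j.val + 1)) = M := by
    ext i j
    simp [M, friezeEntry, Fin.val_inj]
  have htop (i l : Fin (m + 2)) (hi : i.val < 2) : (L * M) i l = friezeEntry f i l := by
    rw [of_rowReduction_mul_of_apply, if_neg (by omega), add_zero]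
  have h0 : friezeEntry f 0 (m + 1) = 1 := by
    rw [friezeEntry, if_neg (by omega), hsym]
    exact hedge'
  have h1 : friezeEntry f 1 0 = 1 := by
    rw [friezeEntry, if_neg one_ne_zero, hsym]
    exact hedge 1 le_rfl (by omega)
  calc _ = (L * M).det := by rw [hM, det_mul, det_of_rowReduction, one_mul]
    _ = (-1) ^ (m + 1) * 2 ^ m * (L * M) 0 (Fin.last (m + 1)) * (L * M) 1 0 :=
        det_eq_of_rows_eq_subdiagonal _ 2 (by rw [htop 0 0 (by simp)]; exact if_pos rfl)
          fun i l hi => rowReduction_mul_friezeEntry_of_two_le hsym hedge hPtolemy hi l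
    _ = -(-2) ^ (m + 2 - 2) := by
        rw [htop 0 _ (by simp), htop 1 0 (by simp), Fin.val_zero, Fin.val_one, Fin.val_last, h0,
          h1, Nat.add_sub_cancel, neg_pow (2 : ℤ), pow_succ]
        ring
end

section
/- Let C = (c_{i,j}) be an n×n symmetric frieze matrix over a field: c_{i,j} = 0 iff i = j, and the Ptolemy relations c_{i,k}c_{j,ℓ} = c_{i,j}c_{k,ℓ} + c_{i,ℓ}c_{j,k} hold for all 1 ≤ i ≤ j ≤ k ≤ ℓ ≤ n. Then det(C) = -(-2)^{n-2} · c_{1,n} · ∏_{i=1}^{n-1} c_{i,i+1}. -/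
/-!
For the rows `r a = (c a b)_b` of `C`, the Ptolemy relations among the indices `a, a+1, a+2, b`
give the three-term relation
`c (a+1) (a+2) • r a - c a (a+2) • r (a+1) + c a (a+1) • r (a+2) = 2 c a (a+1) c (a+1) (a+2) • e (a+1)`.
So a unit upper triangular row reduction turns each row `a ≤ n-2` into `2 c a (a+1) • e (a+1)`;
subtracting a multiple of row `n` from row `n-1` clears its first entry and leaves `c (n-1) n` in its
last one. After cyclically shifting the columns by one, the reduced matrix is lower triangular with
diagonal `2 c 1 2, …, 2 c (n-2) (n-1), c (n-1) n, c n 1`, and the shift contributes `(-1)^(n-1)`.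
-/

open Matrix

theorem Finset.prod_Icc_one_eq_prod_range {M : Type*} [CommMonoid M] (f : ℕ → M) (k : ℕ) :
    ∏ i ∈ Finset.Icc 1 k, f i = ∏ i ∈ Finset.range k, f (i + 1) := by
  rw [← Finset.Ico_add_one_right_eq_Icc, Finset.prod_Ico_eq_prod_range, Nat.add_sub_cancel]
  simp only [add_comm]

structure IsFrieze {K : Type*} [Field K] (n : ℕ) (c : ℕ → ℕ → K) : Prop where
  symm : ∀ i j, c i j = c j i
  eq_zero_iff : ∀ i j, 1 ≤ i → i ≤ n → 1 ≤ j → j ≤ n → (c i j = 0 ↔ i = j)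
  ptolemy : ∀ i j k l, 1 ≤ i → i ≤ j → j ≤ k → k ≤ l → l ≤ n →
    c i k * c j l = c i j * c k l + c i l * c j k

namespace IsFrieze

variable {K : Type*} [Field K] {n : ℕ} {c : ℕ → ℕ → K}

theorem apply_self (hc : IsFrieze n c) {i : ℕ} (h₁ : 1 ≤ i) (h₂ : i ≤ n) : c i i = 0 :=
  (hc.eq_zero_iff i i h₁ h₂ h₁ h₂).2 rfl

theorem apply_ne_zero (hc : IsFrieze n c) {i j : ℕ} (hi₁ : 1 ≤ i) (hi₂ : i ≤ n) (hj₁ : 1 ≤ j)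
    (hj₂ : j ≤ n) (hij : i ≠ j) : c i j ≠ 0 :=
  fun h => hij ((hc.eq_zero_iff i j hi₁ hi₂ hj₁ hj₂).1 h)

theorem row_relation (hc : IsFrieze n c) {a b : ℕ} (ha : 1 ≤ a) (han : a + 2 ≤ n) (hb : 1 ≤ b)
    (hbn : b ≤ n) :
    c (a + 1) (a + 2) * c a b - c a (a + 2) * c (a + 1) b + c a (a + 1) * c (a + 2) b
      = if b = a + 1 then 2 * c a (a + 1) * c (a + 1) (a + 2) else 0 := by
  split_ifs with hb'
  · subst hb'
    rw [hc.apply_self (by omega) (by omega), hc.symm (a + 2)]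
    ring
  · rcases Nat.lt_or_ge b (a + 1) with hlt | hge
    · have := hc.ptolemy b a (a + 1) (a + 2) hb (by omega) (by omega) (by omega) han
      rw [hc.symm a b, hc.symm (a + 1) b, hc.symm (a + 2) b]
      linear_combination -this
    · have := hc.ptolemy a (a + 1) (a + 2) b ha (by omega) (by omega) (by omega) hbn
      linear_combination -this

end IsFrieze

namespace Frieze

variable {K : Type*} [Field K]

def matrix (n : ℕ) (c : ℕ → ℕ → K) : Matrix (Fin n) (Fin n) K :=
  of fun i j => c (i + 1) (j + 1)

/-- Row `i` of the matrix is row `i + 1` of `c`; for `i < m` the coefficients are those of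
`IsFrieze.row_relation` divided by `c (i+2) (i+3)`, for `i = m` they clear column `1`. -/
def coeff₁ (m : ℕ) (c : ℕ → ℕ → K) (i : Fin (m + 2)) : K :=
  if i.val < m then -c (i + 1) (i + 3) / c (i + 2) (i + 3)
  else if i.val = m then -c (m + 1) 1 / c (m + 2) 1 else 0

def coeff₂ (m : ℕ) (c : ℕ → ℕ → K) (i : Fin (m + 2)) : K :=
  if i.val < m then c (i + 1) (i + 2) / c (i + 2) (i + 3) else 0

/-- The addition in `Fin (m + 2)` wraps around, but only where the coefficient vanishes. -/
def reduction (m : ℕ) (c : ℕ → ℕ → K) : Matrix (Fin (m + 2)) (Fin (m + 2)) K :=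
  of fun i k => (if k = i then 1 else 0) + coeff₁ m c i * (if k = i + 1 then 1 else 0)
    + coeff₂ m c i * (if k = i + 1 + 1 then 1 else 0)

def rotated (m : ℕ) (c : ℕ → ℕ → K) : Matrix (Fin (m + 2)) (Fin (m + 2)) K :=
  (reduction m c * matrix (m + 2) c).submatrix id (finRotate (m + 2))

variable {m : ℕ} {c : ℕ → ℕ → K}

theorem reduction_isUpperTriangular : (reduction m c).IsUpperTriangular := by
  intro i k hki
  change k.val < i.val at hki
  simp only [reduction, coeff₁, coeff₂, of_apply, Fin.ext_iff, Fin.val_add_one, Fin.val_last]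
  split_ifs <;> first | rfl | omega | simp_all

theorem reduction_apply_self (i : Fin (m + 2)) : reduction m c i i = 1 := by
  simp only [reduction, coeff₁, coeff₂, of_apply, Fin.ext_iff, Fin.val_add_one, Fin.val_last]
  split_ifs <;> first | omega | simp

theorem det_reduction : (reduction m c).det = 1 := by
  simp [det_of_isUpperTriangular reduction_isUpperTriangular, reduction_apply_self]

theorem reduction_mul_apply (i j : Fin (m + 2)) :
    (reduction m c * matrix (m + 2) c) i j
      = c (i + 1) (j + 1) + coeff₁ m c i * c ((i + 1 : Fin _) + 1) (j + 1)
        + coeff₂ m c i * c ((i + 1 + 1 : Fin _) + 1) (j + 1) := by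
  simp [mul_apply, reduction, matrix, add_mul, ite_mul, Finset.sum_add_distrib]

theorem reduction_mul_apply_of_lt (hc : IsFrieze (m + 2) c) {i : Fin (m + 2)} (hi : i.val < m)
    (j : Fin (m + 2)) :
    (reduction m c * matrix (m + 2) c) i j
      = if j.val = i.val + 1 then 2 * c (i + 1) (i + 2) else 0 := by
  have h₁ : (i + 1).val = i.val + 1 := Fin.val_add_one_of_lt' (by omega)
  have h₂ : (i + 1 + 1).val = i.val + 2 := by rw [Fin.val_add_one_of_lt' (by omega), h₁]
  have hne : c (i + 2) (i + 3) ≠ 0 :=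
    hc.apply_ne_zero (by omega) (by omega) (by omega) (by omega) (by omega)
  have := hc.row_relation (a := i + 1) (b := j + 1) (by omega) (by omega) (by omega) (by omega)
  rw [reduction_mul_apply, h₁, h₂]
  simp only [coeff₁, coeff₂, if_pos hi, add_left_inj] at this ⊢
  field_simp
  split_ifs at this ⊢ <;> linear_combination this

theorem reduction_mul_apply_zero (hc : IsFrieze (m + 2) c) {i : Fin (m + 2)} (hi : i.val = m) :
    (reduction m c * matrix (m + 2) c) i 0 = 0 := by
  have hne : c (m + 2) 1 ≠ 0 := hc.apply_ne_zero (by omega) le_rfl le_rfl (by omega) (by omega)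
  rw [reduction_mul_apply, Fin.val_add_one_of_lt' (by omega)]
  simp only [coeff₁, coeff₂, hi, lt_irrefl, if_false, if_true, Fin.val_zero, zero_add, zero_mul,
    add_zero]
  field_simp
  ring

theorem reduction_mul_apply_last (hc : IsFrieze (m + 2) c) {i : Fin (m + 2)} (hi : i.val = m) :
    (reduction m c * matrix (m + 2) c) i (Fin.last (m + 1)) = c (m + 1) (m + 2) := by
  rw [reduction_mul_apply, Fin.val_add_one_of_lt' (by omega)]
  simp [coeff₁, coeff₂, hi, hc.apply_self (i := m + 2) (by omega) le_rfl]

theorem reduction_mul_apply_of_eq_last {i : Fin (m + 2)} (hi : i = Fin.last (m + 1))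
    (j : Fin (m + 2)) : (reduction m c * matrix (m + 2) c) i j = c (m + 2) (j + 1) := by
  simp [reduction_mul_apply, coeff₁, coeff₂, hi]

theorem rotated_isLowerTriangular (hc : IsFrieze (m + 2) c) :
    (rotated m c).IsLowerTriangular := by
  intro i j hij
  change i.val < j.val at hij
  rcases Nat.lt_or_ge i.val m with hi | hi
  · rw [rotated, submatrix_apply, id, reduction_mul_apply_of_lt hc hi, if_neg]
    simp only [coe_finRotate, Fin.ext_iff, Fin.val_last]
    split_ifs <;> grind
  · have hj : j = Fin.last (m + 1) := Fin.ext (by rw [Fin.val_last]; omega)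
    rw [rotated, submatrix_apply, id, hj, finRotate_last]
    exact reduction_mul_apply_zero hc (by omega)

theorem rotated_apply_self (hc : IsFrieze (m + 2) c) (i : Fin (m + 2)) :
    rotated m c i i = if i.val < m then 2 * c (i + 1) (i + 2)
      else if i.val = m then c (m + 1) (m + 2) else c (m + 2) 1 := by
  rw [rotated, submatrix_apply, id]
  rcases lt_trichotomy i.val m with hi | hi | hi
  · rw [reduction_mul_apply_of_lt hc hi, if_pos hi, if_pos]
    simp only [coe_finRotate, Fin.ext_iff, Fin.val_last]
    split_ifs <;> omega
  · have : finRotate (m + 2) i = Fin.last (m + 1) := by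
      simp only [Fin.ext_iff, coe_finRotate, Fin.val_last]
      split_ifs <;> omega
    rw [this, reduction_mul_apply_last hc hi, if_neg (by omega), if_pos hi]
  · have hi : i = Fin.last (m + 1) := Fin.ext (by rw [Fin.val_last]; omega)
    rw [hi, finRotate_last, reduction_mul_apply_of_eq_last rfl]
    simp

theorem det_rotated (hc : IsFrieze (m + 2) c) :
    (rotated m c).det
      = 2 ^ m * (∏ i ∈ Finset.range m, c (i + 1) (i + 2)) * c (m + 1) (m + 2) * c (m + 2) 1 := by
  rw [det_of_isLowerTriangular _ (rotated_isLowerTriangular hc), Fin.prod_univ_castSucc,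
    Fin.prod_univ_castSucc]
  simp [rotated_apply_self hc, Finset.prod_mul_distrib,
    Fin.prod_univ_eq_prod_range (fun i => c (i + 1) (i + 2))]

theorem det_matrix_eq_neg_one_pow_mul_det_rotated :
    (matrix (m + 2) c).det = (-1) ^ (m + 1) * (rotated m c).det := by
  rw [rotated, det_permute', det_mul, det_reduction, one_mul, sign_finRotate, ← mul_assoc]
  push_cast
  rw [← pow_add, ← two_mul, pow_mul, neg_one_sq, one_pow, one_mul]

end Frieze

/-- (Maldonado, Theorem 2.5) For a symmetric frieze matrix `C` over a field (zero exactly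
on the diagonal, all Ptolemy relations), `det C = -(-2)^(n-2) c(1,n) ∏_{i=1}^{n-1} c(i,i+1)`. -/
theorem det_frieze_matrix_maldonado {K : Type*} [Field K] (n : ℕ) (hn : 2 ≤ n)
    (c : ℕ → ℕ → K)
    (hsym : ∀ i j, c i j = c j i)
    (hzero : ∀ i j, 1 ≤ i → i ≤ n → 1 ≤ j → j ≤ n → (c i j = 0 ↔ i = j))
    (hPtolemy : ∀ i j k l, 1 ≤ i → i ≤ j → j ≤ k → k ≤ l → l ≤ n →
      c i k * c j l = c i j * c k l + c i l * c j k) :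
    (Matrix.of fun i j : Fin n => c (i.val + 1) (j.val + 1)).det
      = -(-2 : K) ^ (n - 2) * c 1 n * ∏ i ∈ Finset.Icc 1 (n - 1), c i (i + 1) := by
  obtain ⟨m, rfl⟩ : ∃ m, n = m + 2 := ⟨n - 2, by omega⟩
  have hc : IsFrieze (m + 2) c := ⟨hsym, hzero, hPtolemy⟩
  change (Frieze.matrix (m + 2) c).det = _
  rw [Frieze.det_matrix_eq_neg_one_pow_mul_det_rotated, Frieze.det_rotated hc, Nat.add_sub_cancel,
    show m + 2 - 1 = m + 1 from rfl, Finset.prod_Icc_one_eq_prod_range, Finset.prod_range_succ,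
    hsym (m + 2), neg_pow (2 : K), pow_succ]
  ring
end

section
/- Let K be a field and let f : diag(R) → K be a weak frieze on an (r+s-2)-gon R with respect to the dissection D = {d} where d = {r-1, r} glues an r-gon P (vertices 1,…,r) and an s-gon Q (vertices r-1, r, r+1,…,r+s-2), with c = f(d) ≠ 0. Let M_f be the associated weak frieze matrix. Performing on M_f the row operations row_i ↦ row_i - c^{-1}f(i,r-1)·row_r - c^{-1}f(i,r)·row_{r-1} for 1 ≤ i ≤ r-2 yields a matrix whose (i,j)-entries vanish for all 1 ≤ i ≤ r-2 and all j ∈ {r-1, r, r+1, …, r+s-2}. -/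
/-! Since `M_f` has zero diagonal and `f` is symmetric, the Ptolemy relation
`c·M(i,j) = f(i,r-1)·M(r,j) + f(i,r)·M(r-1,j)` across `d = {r-1, r}` also holds for
`j = r-1` and `j = r`, where it reads `c·f(i,r-1) = f(i,r-1)·c` and `c·f(i,r) = f(i,r)·c`.
Dividing it by `c` is exactly the vanishing of the row-reduced entry. -/

theorem sub_inv_mul_sub_inv_mul_eq_zero {K : Type*} [DivisionRing K] {c x y z m n : K} (hc : c ≠ 0)
    (h : c * z = x * m + y * n) : z - c⁻¹ * x * m - c⁻¹ * y * n = 0 := by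
  rw [mul_assoc, mul_assoc, sub_sub, ← mul_add, ← h, inv_mul_cancel_left₀ hc, sub_self]

def zeroDiag {K : Type*} [Zero K] (f : ℕ → ℕ → K) (a b : ℕ) : K :=
  if a = b then 0 else f a b

theorem mul_zeroDiag_eq_of_ptolemy {K : Type*} [CommRing K] {f : ℕ → ℕ → K} {r i j : ℕ}
    (hsym : f r (r - 1) = f (r - 1) r) (hi : i + 2 ≤ r) (hj : r - 1 ≤ j)
    (hPtolemy : r + 1 ≤ j →
      f (r - 1) r * f i j = f i (r - 1) * f r j + f i r * f (r - 1) j) :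
    f (r - 1) r * zeroDiag f i j
      = f i (r - 1) * zeroDiag f r j + f i r * zeroDiag f (r - 1) j := by
  obtain rfl | rfl | hj' : j = r - 1 ∨ r = j ∨ r + 1 ≤ j := by omega
  · simp only [zeroDiag, if_neg (show i ≠ r - 1 by omega), if_neg (show r ≠ r - 1 by omega),
      ↓reduceIte, hsym]
    ring
  · simp only [zeroDiag, if_neg (show i ≠ r by omega), if_neg (show r - 1 ≠ r by omega),
      ↓reduceIte]
    ring
  · simpa only [zeroDiag, if_neg (show i ≠ j by omega), if_neg (show r ≠ j by omega),
      if_neg (show r - 1 ≠ j by omega)] using hPtolemy hj'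

theorem weak_frieze_row_operations_vanish_general {K : Type*} [Field K] (r s : ℕ)
    (f : ℕ → ℕ → K)
    (hsym : ∀ i j, f i j = f j i)
    (hc : f (r - 1) r ≠ 0)
    (hPtolemy : ∀ i j, 1 ≤ i → i ≤ r - 2 → r + 1 ≤ j → j ≤ r + s - 2 →
      f (r - 1) r * f i j = f i (r - 1) * f r j + f i r * f (r - 1) j) :
    ∀ i j, 1 ≤ i → i ≤ r - 2 → r - 1 ≤ j → j ≤ r + s - 2 →
      (fun a b => if a = b then (0 : K) else f a b) i j
        - (f (r - 1) r)⁻¹ * f i (r - 1) * (fun a b => if a = b then (0 : K) else f a b) r j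
        - (f (r - 1) r)⁻¹ * f i r * (fun a b => if a = b then (0 : K) else f a b) (r - 1) j
        = 0 := by
  intro i j hi1 hi2 hj1 hj2
  exact sub_inv_mul_sub_inv_mul_eq_zero hc <|
    mul_zeroDiag_eq_of_ptolemy (hsym r (r - 1)) (by omega) hj1 (hPtolemy i j hi1 hi2 · hj2)

/-- The key vanishing lemma in the proof of Theorem 3.3: after the row operations
`row_i ↦ row_i - c⁻¹ f(i,r-1)·row_r - c⁻¹ f(i,r)·row_{r-1}` (for `1 ≤ i ≤ r-2`) on the
weak frieze matrix `M_f` of the glued `(r+s-2)`-gon, the `(i,j)`-entries vanish for all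
`1 ≤ i ≤ r-2` and `r-1 ≤ j ≤ r+s-2`. -/
theorem weak_frieze_row_operations_vanish {K : Type*} [Field K] (r s : ℕ)
    (hr : 3 ≤ r) (hs : 3 ≤ s)
    (f : ℕ → ℕ → K)
    (hsym : ∀ i j, f i j = f j i)
    (hc : f (r - 1) r ≠ 0)
    (hPtolemy : ∀ i j, 1 ≤ i → i ≤ r - 2 → r + 1 ≤ j → j ≤ r + s - 2 →
      f (r - 1) r * f i j = f i (r - 1) * f r j + f i r * f (r - 1) j) :
    ∀ i j, 1 ≤ i → i ≤ r - 2 → r - 1 ≤ j → j ≤ r + s - 2 →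
      (fun a b => if a = b then (0 : K) else f a b) i j
        - (f (r - 1) r)⁻¹ * f i (r - 1) * (fun a b => if a = b then (0 : K) else f a b) r j
        - (f (r - 1) r)⁻¹ * f i r * (fun a b => if a = b then (0 : K) else f a b) (r - 1) j
        = 0 :=
  weak_frieze_row_operations_vanish_general r s f hsym hc hPtolemy
end

section
/- Let c_{i,j} for 1 ≤ i < j ≤ n be nonzero elements of a field forming a tame frieze pattern with coefficients extended by glide symmetry c_{i,j} = c_{j, n+i} to all i < j in ℤ. If all adjacent 2×2 determinants satisfy c_{i,j}c_{i+1,j+1} - c_{i,j+1}c_{i+1,j} = c_{i+1, n+i}·c_{j,j+1}, then the values on diagonals of the n-gon satisfy all Ptolemy relations: c_{i,k}c_{j,ℓ} = c_{i,ℓ}c_{j,k} + c_{i,j}c_{k,ℓ} for 1 ≤ i ≤ j ≤ k ≤ ℓ ≤ n. -/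
/-!
The entries of two adjacent rows `a`, `a + 1` determine the whole frieze. Using the `2 × 2` rule
and cancelling nonzero entries, a downward induction on the row shows that any three consecutive
columns are linearly dependent (Ptolemy for `m, j, j + 1, j + 2`), and an induction on the column
then gives `c a (a + 1) * c k l = c a k * c (a + 1) l - c a l * c (a + 1) k`. So, up to the fixed
nonzero scalar `c a (a + 1)`, every entry is a `2 × 2` minor of a matrix with two rows, and the
Ptolemy relations become the Plücker relations, a polynomial identity.
-/

section

variable {K : Type*} [CommRing K] [IsDomain K]

structure IsFriezeOn (c : ℤ → ℤ → K) (a b : ℤ) : Prop where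
  diag : ∀ i, a ≤ i → i ≤ b → c i i = 0
  ne_zero : ∀ i j, a ≤ i → i < j → j ≤ b → c i j ≠ 0
  det_eq : ∀ i j, a ≤ i → i < j → j < b →
    c i j * c (i + 1) (j + 1) - c i (j + 1) * c (i + 1) j = c i (i + 1) * c j (j + 1)

theorem ptolemy_of_mul_eq_minor {c : ℤ → ℤ → K} {a b : ℤ} {s : K} (hs : s ≠ 0) (x y : ℤ → K)
    (h : ∀ k l, a ≤ k → k ≤ l → l ≤ b → s * c k l = x k * y l - x l * y k)
    {i j k l : ℤ} (hai : a ≤ i) (hij : i ≤ j) (hjk : j ≤ k) (hkl : k ≤ l) (hlb : l ≤ b) :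
    c i k * c j l = c i l * c j k + c i j * c k l := by
  have eik := h i k hai (by omega) (by omega)
  have ejl := h j l (by omega) (by omega) hlb
  have eil := h i l hai (by omega) hlb
  have ejk := h j k (by omega) hjk (by omega)
  have eij := h i j hai hij (by omega)
  have ekl := h k l (by omega) hkl hlb
  apply mul_left_cancel₀ (pow_ne_zero 2 hs)
  linear_combination (s * c j l) * eik + (x i * y k - x k * y i) * ejl
    - (s * c j k) * eil - (x i * y l - x l * y i) * ejk
    - (s * c k l) * eij - (x i * y j - x j * y i) * ekl

namespace IsFriezeOn

variable {c : ℤ → ℤ → K} {a b : ℤ}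

theorem ptolemy_consecutive_columns (hc : IsFriezeOn c a b) {m j : ℤ} (ham : a ≤ m)
    (hmj : m ≤ j) (hj : j + 2 ≤ b) :
    c m (j + 1) * c j (j + 2) = c m (j + 2) * c j (j + 1) + c m j * c (j + 1) (j + 2) := by
  induction m, hmj using Int.leInductionDown with
  | base => rw [hc.diag j ham (by omega)]; ring
  | pred m hmj ih =>
    have h₁ := hc.det_eq (m - 1) j ham (by omega) (by omega)
    have h₂ := hc.det_eq (m - 1) (j + 1) ham (by omega) (by omega)
    simp only [sub_add_cancel, add_assoc, one_add_one_eq_two] at h₁ h₂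
    apply mul_left_cancel₀ (hc.ne_zero m (j + 1) (by omega) (by omega) (by omega))
    linear_combination c (m - 1) (j + 1) * ih (by omega) + c j (j + 1) * h₂
      - c (j + 1) (j + 2) * h₁

theorem ptolemy_consecutive_rows (hc : IsFriezeOn c a b) {r k l : ℤ} (har : a ≤ r)
    (hrk : r < k) (hkl : k ≤ l) (hlb : l ≤ b) :
    c r k * c (r + 1) l = c r l * c (r + 1) k + c r (r + 1) * c k l := by
  obtain ⟨d, rfl⟩ : ∃ d : ℕ, l = k + d := ⟨(l - k).toNat, by omega⟩
  induction d using Nat.twoStepInduction with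
  | zero => rw [Nat.cast_zero, add_zero, hc.diag k (by omega) (by omega)]; ring
  | one => linear_combination hc.det_eq r k har hrk (by omega)
  | more d ih₀ ih₁ =>
    have hkj : k ≤ k + d := by omega
    push_cast at ih₀ ih₁ hlb ⊢
    simp only [← add_assoc] at ih₀ ih₁ hlb ⊢
    generalize k + (d : ℤ) = j at hkj ih₀ ih₁ hlb ⊢
    have hr := hc.ptolemy_consecutive_columns har (j := j) (by omega) (by omega)
    have hr₁ :=
      hc.ptolemy_consecutive_columns (m := r + 1) (j := j) (by omega) (by omega) (by omega)
    have hk := hc.ptolemy_consecutive_columns (m := k) (j := j) (by omega) (by omega) (by omega)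
    apply mul_left_cancel₀ (hc.ne_zero j (j + 1) (by omega) (by omega) (by omega))
    linear_combination c (r + 1) k * hr + c r (r + 1) * hk - c r k * hr₁
      - c (j + 1) (j + 2) * ih₀ hkj (by omega) + c j (j + 2) * ih₁ (by omega) (by omega)

theorem ptolemy (hc : IsFriezeOn c a b) {i j k l : ℤ} (hai : a ≤ i) (hij : i ≤ j) (hjk : j ≤ k)
    (hkl : k ≤ l) (hlb : l ≤ b) : c i k * c j l = c i l * c j k + c i j * c k l := by
  obtain rfl | hij := eq_or_lt_of_le hij
  · rw [hc.diag i hai (by omega)]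
    ring
  refine ptolemy_of_mul_eq_minor (hc.ne_zero a (a + 1) le_rfl (lt_add_one a) (by omega)) (c a)
    (Function.update (c (a + 1)) a (-c a (a + 1))) ?_ hai hij.le hjk hkl hlb
  -- The triangle has no entry `c (a + 1) a`; `-c a (a + 1)` makes the minor on columns `a`, `q`
  -- equal to `c a (a + 1) * c a q`.
  intro p q hap hpq hqb
  obtain rfl | hap := eq_or_lt_of_le hap
  · rw [Function.update_self, hc.diag a le_rfl (by omega)]
    ring
  rw [Function.update_of_ne hap.ne', Function.update_of_ne (hap.trans_le hpq).ne']
  linear_combination -hc.ptolemy_consecutive_rows le_rfl hap hpq hqb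

end IsFriezeOn

end

theorem frieze_pattern_ptolemy_general {K : Type*} [Field K] (n : ℕ)
    (c : ℤ → ℤ → K)
    (hdiag : ∀ i : ℤ, c i i = 0)
    (hnonzero : ∀ i j : ℤ, 1 ≤ i → i < j → j ≤ (n : ℤ) → c i j ≠ 0)
    (hglide : ∀ i j : ℤ, i < j → c i j = c j ((n : ℤ) + i))
    (hrule : ∀ i j : ℤ, i + 1 ≤ j → j ≤ (n : ℤ) + i - 1 →
      c i j * c (i + 1) (j + 1) - c i (j + 1) * c (i + 1) j
        = c (i + 1) ((n : ℤ) + i) * c j (j + 1)) :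
    ∀ i j k l : ℤ, 1 ≤ i → i ≤ j → j ≤ k → k ≤ l → l ≤ (n : ℤ) →
      c i k * c j l = c i l * c j k + c i j * c k l := by
  have hc : IsFriezeOn c 1 n :=
    { diag := fun i _ _ => hdiag i
      ne_zero := hnonzero
      det_eq := fun i j hi hij hj => by
        rw [hglide i (i + 1) (lt_add_one i)]
        exact hrule i j hij (by omega) }
  exact fun i j k l hi hij hjk hkl hl => hc.ptolemy hi hij hjk hkl hl

/-- (Cuntz–Holm–Jørgensen, Theorem 3.3) A tame frieze pattern with coefficients, given by
entries `c i j` (for `i ≤ j ≤ n + i` in `ℤ`) with zero diagonal, nonzero entries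
`c i j ≠ 0` for `1 ≤ i < j ≤ n`, glide symmetry `c i j = c j (n+i)`, and all adjacent
complete `2×2` determinants equal to `c (i+1) (n+i) * c j (j+1)`, satisfies all Ptolemy
relations on the diagonals of the `n`-gon. -/
theorem frieze_pattern_ptolemy {K : Type*} [Field K] (n : ℕ) (hn : 3 ≤ n)
    (c : ℤ → ℤ → K)
    (hdiag : ∀ i : ℤ, c i i = 0)
    (hnonzero : ∀ i j : ℤ, 1 ≤ i → i < j → j ≤ (n : ℤ) → c i j ≠ 0)
    (hglide : ∀ i j : ℤ, i < j → c i j = c j ((n : ℤ) + i))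
    (hrule : ∀ i j : ℤ, i + 1 ≤ j → j ≤ (n : ℤ) + i - 1 →
      c i j * c (i + 1) (j + 1) - c i (j + 1) * c (i + 1) j
        = c (i + 1) ((n : ℤ) + i) * c j (j + 1)) :
    ∀ i j k l : ℤ, 1 ≤ i → i ≤ j → j ≤ k → k ≤ l → l ≤ (n : ℤ) →
      c i k * c j l = c i l * c j k + c i j * c k l :=
  frieze_pattern_ptolemy_general n c hdiag hnonzero hglide hrule
end
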